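/- Let ρ ∈ C^∞_c(ℝ) be a standard mollifier (ρ even, nonnegative, ∫_ℝ ρ(τ) dτ = 1) and set ρ_i(τ) = i ρ(iτ). Given an N-function M and a measurable function Φ : Q → S³ with ∫_Q M(x, Φ(x,t)) dx dt < ∞, the sequence of functions {M(x, (ρ_i ∗ Φ)(x,t))} is uniformly integrable on Q. -/

import Mathlib

open MeasureTheory Filter Set Topology
open scoped ENNReal NNReal

noncomputable section

/-- `ℝ³`, the ambient space of the material body `Ω`. -/
abbrev E3 := EuclideanSpace ℝ (Fin 3)

/-- `3 × 3` real matrices. -/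
abbrev Mat3 := Matrix (Fin 3) (Fin 3) ℝ

instance : MeasurableSpace Mat3 := inferInstanceAs (MeasurableSpace (Fin 3 → Fin 3 → ℝ))

/-- The Frobenius inner product `ξ : η` on matrices. -/
def mdot (ξ η : Mat3) : ℝ := ∑ i, ∑ j, ξ i j * η i j

/-- The Frobenius norm `|ξ|` of a matrix. -/
def mnorm (ξ : Mat3) : ℝ := Real.sqrt (mdot ξ ξ)

/-- `S³`: the set of symmetric `3 × 3` real matrices. -/
def Sym3 : Set Mat3 := {A | A.IsSymm}

/-- `S³_d`: the set of symmetric traceless `3 × 3` real matrices. -/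
def Sym3d : Set Mat3 := {A | A.IsSymm ∧ A.trace = 0}

/-- `M : Ω × S³ → [0,∞)` is an `N`-function: Carathéodory (measurable in `x`,
continuous in `ξ`), vanishing exactly at `0`, even, convex in `ξ`, with
`M(x,ξ)/|ξ| → 0` as `|ξ| → 0` and `M(x,ξ)/|ξ| → ∞` as `|ξ| → ∞`. -/
structure IsNFunction (Ω : Set E3) (M : E3 → Mat3 → ℝ) : Prop where
  nonneg : ∀ x ξ, 0 ≤ M x ξ
  meas : ∀ ξ, Measurable fun x => M x ξ
  cont : ∀ x, ContinuousOn (M x) Sym3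
  zero_iff : ∀ x ∈ Ω, ∀ ξ ∈ Sym3, (M x ξ = 0 ↔ ξ = 0)
  even : ∀ x ∈ Ω, ∀ ξ ∈ Sym3, M x (-ξ) = M x ξ
  convexOn : ∀ x, ConvexOn ℝ Sym3 (M x)
  tendsto_zero : ∀ x ∈ Ω,
    Tendsto (fun ξ => M x ξ / mnorm ξ) (nhdsWithin 0 (Sym3 \ {0})) (nhds 0)
  tendsto_top : ∀ x ∈ Ω,
    Tendsto (fun ξ => M x ξ / mnorm ξ) ((comap mnorm atTop) ⊓ Filter.principal Sym3) atTop

/-- The complementary function `M*(x,η) = sup_{ξ ∈ S³} (ξ:η − M(x,ξ))`. -/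
def complFn (M : E3 → Mat3 → ℝ) (x : E3) (η : Mat3) : ℝ :=
  ⨆ ξ : Sym3, (mdot ξ.1 η - M x ξ.1)

/-- A sequence of integrable functions `f i : α → ℝ` is uniformly integrable:
`lim_{R→∞} sup_i ∫_{{|f i| ≥ R}} |f i| = 0`. -/
def UnifIntSeq {α : Type*} [MeasurableSpace α] (μ : Measure α) (f : ℕ → α → ℝ) : Prop :=
  (∀ i, ∫⁻ y, ENNReal.ofReal |f i y| ∂μ < ⊤) ∧
  ∀ ε : ℝ, 0 < ε → ∃ R : ℝ, ∀ i,
    (∫⁻ y in {y | R ≤ |f i y|}, ENNReal.ofReal |f i y| ∂μ) ≤ ENNReal.ofReal ε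

/-- Convolution in the time variable only: `(ρᵢ ∗ Φ)(x,t) = ∫ ρᵢ(t−s) Φ(x,s) ds`,
with `Φ(x,·)` extended by zero outside `(0,T)` (entrywise Bochner integrals). -/
def timeConv (T : ℝ) (ρi : ℝ → ℝ) (Φ : E3 × ℝ → Mat3) (q : E3 × ℝ) : Mat3 :=
  Matrix.of fun j k => ∫ s in Ioo (0:ℝ) T, ρi (q.2 - s) * Φ (q.1, s) j k

instance : NormedAddCommGroup Mat3 := inferInstanceAs (NormedAddCommGroup (Fin 3 → Fin 3 → ℝ))
instance : NormedSpace ℝ Mat3 := inferInstanceAs (NormedSpace ℝ (Fin 3 → Fin 3 → ℝ))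
instance : BorelSpace Mat3 := inferInstanceAs (BorelSpace (Fin 3 → Fin 3 → ℝ))
instance : SecondCountableTopology Mat3 :=
  inferInstanceAs (SecondCountableTopology (Fin 3 → Fin 3 → ℝ))
instance : CompleteSpace Mat3 := inferInstanceAs (CompleteSpace (Fin 3 → Fin 3 → ℝ))

lemma aux_sym3_closed : IsClosed Sym3 := by
  have : Sym3 = ⋂ (i : Fin 3) (j : Fin 3), {A : Mat3 | A j i = A i j} := by
    ext A
    simp only [Sym3, Matrix.IsSymm, mem_iInter, mem_setOf_eq, ← Matrix.ext_iff,
      Matrix.transpose_apply]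
  rw [this]
  exact isClosed_iInter fun i => isClosed_iInter fun j =>
    isClosed_eq ((continuous_apply i).comp (continuous_apply j))
      ((continuous_apply j).comp (continuous_apply i))

lemma aux_zero_mem : (0 : Mat3) ∈ Sym3 := by
  simp [Sym3, Matrix.IsSymm]

lemma aux_mnorm_nonneg (A : Mat3) : 0 ≤ mnorm A := Real.sqrt_nonneg _

lemma aux_norm_le_mnorm (A : Mat3) : ‖A‖ ≤ mnorm A := by
  rw [show ‖A‖ = ‖fun j k => A j k‖ from rfl]
  refine pi_norm_le_iff_of_nonneg (aux_mnorm_nonneg A) |>.2 fun j => ?_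
  refine pi_norm_le_iff_of_nonneg (aux_mnorm_nonneg A) |>.2 fun k => ?_
  rw [Real.norm_eq_abs, mnorm, ← Real.sqrt_sq_eq_abs]
  apply Real.sqrt_le_sqrt
  rw [mdot]
  have h1 : (A j k) ^ 2 ≤ ∑ l, A j l * A j l := by
    have := Finset.single_le_sum (f := fun l => A j l * A j l)
      (fun l _ => mul_self_nonneg _) (Finset.mem_univ k)
    simpa [sq] using this
  refine le_trans h1 ?_
  exact Finset.single_le_sum (f := fun i => ∑ l, A i l * A i l)
    (fun i _ => Finset.sum_nonneg fun l _ => mul_self_nonneg _) (Finset.mem_univ j)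

lemma aux_meas_M {α : Type*} [MeasurableSpace α] {M : E3 → Mat3 → ℝ}
    (hmeas : ∀ ξ, Measurable fun x => M x ξ) (hcont : ∀ x, ContinuousOn (M x) Sym3)
    {g : α → Mat3} (hg : Measurable g) (hgs : ∀ a, g a ∈ Sym3)
    {e : α → E3} (he : Measurable e) :
    Measurable fun a => M (e a) (g a) := by
  have hu : Measurable (Function.uncurry fun (ξ : Sym3) (y : E3) => M y ξ.1) :=
    measurable_uncurry_of_continuous_of_measurable
      (fun y => (hcont y).restrict) (fun ξ => hmeas ξ.1)
  have h2 : Measurable fun a => ((⟨g a, hgs a⟩ : Sym3), e a) :=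
    (hg.subtype_mk).prodMk he
  exact hu.comp h2

lemma aux_lint_sub_right (f : ℝ → ℝ≥0∞) (a : ℝ) : ∫⁻ x, f (x - a) = ∫⁻ x, f x := by
  simpa [sub_eq_add_neg] using lintegral_add_right_eq_self f (-a)

lemma aux_lint_sub_left (f : ℝ → ℝ≥0∞) (a : ℝ) : ∫⁻ x, f (a - x) = ∫⁻ x, f x :=
  (Measure.measurePreserving_sub_left volume a).lintegral_comp_emb
    (MeasurableEquiv.subLeft a).measurableEmbedding f

lemma aux_lint_ofReal {c : ℝ → ℝ} (hc : Integrable c) (hnn : ∀ τ, 0 ≤ c τ) :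
    ∫⁻ τ, ENNReal.ofReal (c τ) = ENNReal.ofReal (∫ τ, c τ) :=
  (ofReal_integral_eq_lintegral_ofReal hc (ae_of_all _ hnn)).symm

lemma aux_int_scaled (ρ : ℝ → ℝ) (hρint : (∫ τ, ρ τ) = 1) (i : ℕ) (hi : 1 ≤ i) :
    (∫ τ, (i:ℝ) * ρ ((i:ℝ) * τ)) = 1 := by
  have hi0 : (i:ℝ) ≠ 0 := Nat.cast_ne_zero.2 (by omega)
  rw [MeasureTheory.integral_const_mul, Measure.integral_comp_mul_left ρ (i:ℝ), hρint]
  simp only [smul_eq_mul, mul_one]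
  rw [abs_of_nonneg (by positivity)]
  field_simp

lemma aux_integral_apply {m : ℝ → Mat3} (hm : Integrable m (volume : Measure ℝ)) (j k : Fin 3) :
    (∫ s, m s) j k = ∫ s, m s j k := by
  have h1 := (ContinuousLinearMap.proj (R := ℝ) (φ := fun _ : Fin 3 => Fin 3 → ℝ)
    j).integral_comp_comm hm
  have h2 : Integrable fun s => m s j :=
    (ContinuousLinearMap.proj (R := ℝ) (φ := fun _ : Fin 3 => Fin 3 → ℝ) j).integrable_comp hm
  have h3 := (ContinuousLinearMap.proj (R := ℝ) (φ := fun _ : Fin 3 => ℝ)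
    k).integral_comp_comm h2
  have e1 : (∫ s, m s) j = ∫ s, m s j := h1.symm
  have e2 : (∫ s, m s j) k = ∫ s, m s j k := h3.symm
  rw [e1, e2]

lemma aux_jensen
    (T : ℝ) (x : E3) {M : E3 → Mat3 → ℝ}
    (hnn : ∀ ξ, 0 ≤ M x ξ)
    (hcont : ContinuousOn (M x) Sym3) (hconv : ConvexOn ℝ Sym3 (M x)) (hz : M x 0 = 0)
    {Φ : E3 × ℝ → Mat3} (hΦm : Measurable Φ) (hΦs : ∀ q, Φ q ∈ Sym3)
    (hMsec : Measurable fun s : ℝ => M x (Φ (x, s)))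
    (hfin : ∫⁻ s in Ioo (0:ℝ) T, ENNReal.ofReal (M x (Φ (x, s))) ∂volume < ⊤)
    {r : ℝ} (hr0 : 0 ≤ r) (hr : ∀ ξ ∈ Sym3, mnorm ξ ≤ r + M x ξ)
    {c : ℝ → ℝ} (hc : Continuous c) (hcs : HasCompactSupport c)
    (hcnn : ∀ τ, 0 ≤ c τ) (hc1 : (∫ τ, c τ) = 1) (t : ℝ) :
    ENNReal.ofReal (M x (timeConv T c Φ (x, t)))
      ≤ ∫⁻ s, ENNReal.ofReal (c (t - s)) *
          (Ioo (0:ℝ) T).indicator (fun s => ENNReal.ofReal (M x (Φ (x, s)))) s := by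
  set f : ℝ → Mat3 := (Ioo (0:ℝ) T).indicator (fun s => Φ (x, s)) with hf
  have hfm : Measurable f :=
    (hΦm.comp (measurable_const.prodMk measurable_id)).indicator measurableSet_Ioo
  have hfs : ∀ s, f s ∈ Sym3 := by
    intro s; by_cases hs : s ∈ Ioo (0:ℝ) T
    · rw [hf, indicator_of_mem hs]; exact hΦs _
    · rw [hf, indicator_of_notMem hs]; exact aux_zero_mem
  have hMf : ∀ s, M x (f s) = (Ioo (0:ℝ) T).indicator (fun s => M x (Φ (x, s))) s := by
    intro s; by_cases hs : s ∈ Ioo (0:ℝ) T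
    · rw [hf, indicator_of_mem hs, indicator_of_mem hs]
    · rw [hf, indicator_of_notMem hs, indicator_of_notMem hs]; exact hz
  have hfb : ∀ s, ‖f s‖ ≤ (Ioo (0:ℝ) T).indicator (fun s => r + M x (Φ (x, s))) s := by
    intro s; by_cases hs : s ∈ Ioo (0:ℝ) T
    · rw [hf, indicator_of_mem hs, indicator_of_mem hs]
      exact (aux_norm_le_mnorm _).trans (hr _ (hΦs _))
    · rw [hf, indicator_of_notMem hs, indicator_of_notMem hs]; simp
  set w : ℝ → ℝ≥0∞ := fun s => ENNReal.ofReal (c (t - s)) with hw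
  have hwm : Measurable w :=
    (hc.measurable.comp (measurable_const.sub measurable_id)).ennreal_ofReal
  have hcint : Integrable c := hc.integrable_of_hasCompactSupport hcs
  obtain ⟨C, hC⟩ := hcs.exists_bound_of_continuous hc
  have hCb : ∀ s, w s ≤ ENNReal.ofReal C := fun s =>
    ENNReal.ofReal_le_ofReal ((le_abs_self _).trans (hC _))
  set ν : Measure ℝ := volume.withDensity w with hν
  haveI hν1 : IsProbabilityMeasure ν := by
    constructor
    rw [hν, withDensity_apply _ MeasurableSet.univ, Measure.restrict_univ]
    simp only [hw]
    rw [aux_lint_sub_left (fun τ => ENNReal.ofReal (c τ)) t, aux_lint_ofReal hcint hcnn, hc1]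
    exact ENNReal.ofReal_one
  -- generic bound for ∫⁻ w * indicator
  have hKey : ∀ gR : ℝ → ℝ,
      (∫⁻ s, w s * ENNReal.ofReal ((Ioo (0:ℝ) T).indicator gR s))
        ≤ ENNReal.ofReal C * ∫⁻ s in Ioo (0:ℝ) T, ENNReal.ofReal (gR s) := by
    intro gR
    have hpt : ∀ s, ENNReal.ofReal ((Ioo (0:ℝ) T).indicator gR s)
        = (Ioo (0:ℝ) T).indicator (fun s => ENNReal.ofReal (gR s)) s := by
      intro s; by_cases hs : s ∈ Ioo (0:ℝ) T
      · rw [indicator_of_mem hs, indicator_of_mem hs]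
      · rw [indicator_of_notMem hs, indicator_of_notMem hs]; exact ENNReal.ofReal_zero
    calc (∫⁻ s, w s * ENNReal.ofReal ((Ioo (0:ℝ) T).indicator gR s))
        ≤ ∫⁻ s, ENNReal.ofReal C * ENNReal.ofReal ((Ioo (0:ℝ) T).indicator gR s) :=
          lintegral_mono fun s => mul_le_mul_left (hCb s) _
      _ = ENNReal.ofReal C * ∫⁻ s, ENNReal.ofReal ((Ioo (0:ℝ) T).indicator gR s) :=
          lintegral_const_mul' _ _ ENNReal.ofReal_ne_top
      _ = ENNReal.ofReal C * ∫⁻ s in Ioo (0:ℝ) T, ENNReal.ofReal (gR s) := by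
          congr 1
          rw [show (fun s => ENNReal.ofReal ((Ioo (0:ℝ) T).indicator gR s))
              = (Ioo (0:ℝ) T).indicator (fun s => ENNReal.ofReal (gR s)) from funext hpt]
          exact lintegral_indicator measurableSet_Ioo _
  have hIoo_fin : ∫⁻ s in Ioo (0:ℝ) T, ENNReal.ofReal (r + M x (Φ (x, s))) ∂volume < ⊤ := by
    have hb : ∀ s, ENNReal.ofReal (r + M x (Φ (x, s)))
        ≤ ENNReal.ofReal r + ENNReal.ofReal (M x (Φ (x, s))) := fun s =>
      ENNReal.ofReal_add_le
    calc ∫⁻ s in Ioo (0:ℝ) T, ENNReal.ofReal (r + M x (Φ (x, s))) ∂volume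
        ≤ ∫⁻ s in Ioo (0:ℝ) T,
            (ENNReal.ofReal r + ENNReal.ofReal (M x (Φ (x, s)))) ∂volume :=
          lintegral_mono hb
      _ = ENNReal.ofReal r * volume (Ioo (0:ℝ) T)
            + ∫⁻ s in Ioo (0:ℝ) T, ENNReal.ofReal (M x (Φ (x, s))) ∂volume := by
          rw [lintegral_add_left measurable_const, setLIntegral_const]
      _ < ⊤ := by
          refine ENNReal.add_lt_top.2 ⟨?_, hfin⟩
          exact ENNReal.mul_lt_top ENNReal.ofReal_lt_top measure_Ioo_lt_top
  -- integrability of f w.r.t. ν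
  have hfi : Integrable f ν := by
    refine ⟨hfm.aestronglyMeasurable, ?_⟩
    rw [hasFiniteIntegral_iff_norm, hν,
      lintegral_withDensity_eq_lintegral_mul _ hwm hfm.norm.ennreal_ofReal]
    have hb : ∀ s, (w * fun a => ENNReal.ofReal ‖f a‖) s
        ≤ w s * ENNReal.ofReal ((Ioo (0:ℝ) T).indicator (fun s => r + M x (Φ (x, s))) s) :=
      fun s => mul_le_mul_right (ENNReal.ofReal_le_ofReal (hfb s)) _
    calc ∫⁻ s, (w * fun a => ENNReal.ofReal ‖f a‖) s
        ≤ ∫⁻ s, w s * ENNReal.ofReal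
            ((Ioo (0:ℝ) T).indicator (fun s => r + M x (Φ (x, s))) s) := lintegral_mono hb
      _ ≤ ENNReal.ofReal C * ∫⁻ s in Ioo (0:ℝ) T,
            ENNReal.ofReal (r + M x (Φ (x, s))) := hKey _
      _ < ⊤ := ENNReal.mul_lt_top ENNReal.ofReal_lt_top hIoo_fin
  have hgm : Measurable fun s => M x (f s) := by
    rw [show (fun s => M x (f s))
        = (Ioo (0:ℝ) T).indicator (fun s => M x (Φ (x, s))) from funext hMf]
    exact hMsec.indicator measurableSet_Ioo
  have hgi : Integrable (fun s => M x (f s)) ν := by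
    refine ⟨hgm.aestronglyMeasurable, ?_⟩
    rw [hasFiniteIntegral_iff_norm, hν,
      lintegral_withDensity_eq_lintegral_mul _ hwm hgm.norm.ennreal_ofReal]
    have hb : ∀ s, (w * fun a => ENNReal.ofReal ‖M x (f a)‖) s
        ≤ w s * ENNReal.ofReal ((Ioo (0:ℝ) T).indicator (fun s => M x (Φ (x, s))) s) := by
      intro s
      refine mul_le_mul_right (ENNReal.ofReal_le_ofReal ?_) _
      rw [Real.norm_eq_abs, abs_of_nonneg (hnn _), hMf s]
    calc ∫⁻ s, (w * fun a => ENNReal.ofReal ‖M x (f a)‖) s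
        ≤ ∫⁻ s, w s * ENNReal.ofReal
            ((Ioo (0:ℝ) T).indicator (fun s => M x (Φ (x, s))) s) := lintegral_mono hb
      _ ≤ ENNReal.ofReal C * ∫⁻ s in Ioo (0:ℝ) T,
            ENNReal.ofReal (M x (Φ (x, s))) := hKey _
      _ < ⊤ := ENNReal.mul_lt_top ENNReal.ofReal_lt_top hfin
  have hjen := hconv.map_integral_le hcont aux_sym3_closed (ae_of_all _ hfs) hfi hgi
  -- identify the barycenter with timeConv
  have hd : Measurable fun s => (c (t - s)).toNNReal :=
    (hc.comp (continuous_const.sub continuous_id)).measurable.real_toNNReal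
  have hwd : w = fun s => (((c (t - s)).toNNReal : ℝ≥0) : ℝ≥0∞) := hw.trans rfl
  have hint : ∫ s, f s ∂ν = ∫ s, (c (t - s)).toNNReal • f s := by
    rw [hν, hwd]
    exact integral_withDensity_eq_integral_smul hd f
  have hmi : Integrable (fun s => (c (t - s)).toNNReal • f s) (volume : Measure ℝ) := by
    rw [← integrable_withDensity_iff_integrable_smul hd]
    rw [hν, hwd] at hfi
    exact hfi
  have hTC : timeConv T c Φ (x, t) = ∫ s, f s ∂ν := by
    rw [hint]
    apply Matrix.ext
    intro j k
    rw [aux_integral_apply hmi j k]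
    show (∫ s in Ioo (0:ℝ) T, c (t - s) * Φ (x, s) j k) = _
    rw [← integral_indicator measurableSet_Ioo]
    congr 1; funext s
    by_cases hs : s ∈ Ioo (0:ℝ) T
    · rw [indicator_of_mem hs, hf, indicator_of_mem hs]
      show c (t - s) * Φ (x, s) j k = ((c (t - s)).toNNReal : ℝ) • Φ (x, s) j k
      rw [Real.coe_toNNReal _ (hcnn _), smul_eq_mul]
    · rw [indicator_of_notMem hs, hf, indicator_of_notMem hs]
      show (0:ℝ) = ((c (t - s)).toNNReal • (0 : Mat3)) j k
      rw [smul_zero]; rfl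
  have hL : M x (timeConv T c Φ (x, t)) ≤ ∫ s, M x (f s) ∂ν := by
    rw [hTC]; exact hjen
  calc ENNReal.ofReal (M x (timeConv T c Φ (x, t)))
      ≤ ENNReal.ofReal (∫ s, M x (f s) ∂ν) := ENNReal.ofReal_le_ofReal hL
    _ = ∫⁻ s, ENNReal.ofReal (M x (f s)) ∂ν :=
        ofReal_integral_eq_lintegral_ofReal hgi (ae_of_all _ fun s => hnn _)
    _ = ∫⁻ s, (w * fun s => ENNReal.ofReal (M x (f s))) s := by
        rw [hν, lintegral_withDensity_eq_lintegral_mul _ hwm hgm.ennreal_ofReal]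
    _ = ∫⁻ s, ENNReal.ofReal (c (t - s)) *
          (Ioo (0:ℝ) T).indicator (fun s => ENNReal.ofReal (M x (Φ (x, s)))) s := by
        apply lintegral_congr
        intro s
        show w s * ENNReal.ofReal (M x (f s)) = w s * _
        congr 1
        rw [hMf s]
        by_cases hs : s ∈ Ioo (0:ℝ) T
        · rw [indicator_of_mem hs, indicator_of_mem hs]
        · rw [indicator_of_notMem hs, indicator_of_notMem hs]; exact ENNReal.ofReal_zero

lemma aux_tonelli (Ω : Set E3) (T : ℝ)
    {G : E3 × ℝ → ℝ≥0∞} (hG : Measurable G)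
    {w : ℝ → ℝ≥0∞} (hw : Measurable w) (hw1 : ∀ s : ℝ, (∫⁻ t, w (t - s)) ≤ 1) :
    (∫⁻ q in Ω ×ˢ (univ : Set ℝ), (∫⁻ s, w (q.2 - s) * G (q.1, s)) ∂volume)
      ≤ ∫⁻ q in Ω ×ˢ (univ : Set ℝ), G q ∂volume := by
  have hWG : Measurable fun p : (E3 × ℝ) × ℝ => w (p.1.2 - p.2) * G (p.1.1, p.2) :=
    ((hw.comp ((measurable_fst.snd).sub measurable_snd)).mul
      (hG.comp ((measurable_fst.fst).prodMk measurable_snd)))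
  rw [Measure.volume_eq_prod, ← Measure.prod_restrict, Measure.restrict_univ]
  rw [lintegral_prod _ (hWG.lintegral_prod_right').aemeasurable,
    lintegral_prod _ hG.aemeasurable]
  refine lintegral_mono fun x => ?_
  have hswap : (∫⁻ t, ∫⁻ s, w (t - s) * G (x, s)) = ∫⁻ s, ∫⁻ t, w (t - s) * G (x, s) := by
    apply lintegral_lintegral_swap
    exact ((hw.comp (measurable_fst.sub measurable_snd)).mul
      (hG.comp (measurable_const.prodMk measurable_snd))).aemeasurable
  calc (∫⁻ t, ∫⁻ s, w (t - s) * G (x, s)) = ∫⁻ s, ∫⁻ t, w (t - s) * G (x, s) := hswap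
    _ ≤ ∫⁻ s, G (x, s) := by
        refine lintegral_mono fun s => ?_
        have hmt : Measurable fun t : ℝ => w (t - s) :=
          hw.comp (measurable_id.sub measurable_const)
        rw [lintegral_mul_const _ hmt]
        calc (∫⁻ t, w (t - s)) * G (x, s) ≤ 1 * G (x, s) :=
              mul_le_mul_left (hw1 s) _
          _ = G (x, s) := one_mul _

lemma aux_timeConv_meas (T : ℝ) {c : ℝ → ℝ} (hc : Continuous c)
    {Φ : E3 × ℝ → Mat3} (hΦm : Measurable Φ) :
    Measurable fun q : E3 × ℝ => timeConv T c Φ q := by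
  apply measurable_pi_lambda
  intro j
  apply measurable_pi_lambda
  intro k
  have hint : StronglyMeasurable fun p : (E3 × ℝ) × ℝ => c (p.1.2 - p.2) * Φ (p.1.1, p.2) j k :=
    (((hc.measurable.comp ((measurable_fst.snd).sub measurable_snd))).mul
      (((measurable_pi_apply k).comp ((measurable_pi_apply j).comp
        (hΦm.comp ((measurable_fst.fst).prodMk measurable_snd)))))).stronglyMeasurable
  exact (hint.integral_prod_right').measurable

lemma aux_timeConv_symm (T : ℝ) (c : ℝ → ℝ) {Φ : E3 × ℝ → Mat3} (hΦs : ∀ q, Φ q ∈ Sym3)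
    (q : E3 × ℝ) : timeConv T c Φ q ∈ Sym3 := by
  show Matrix.IsSymm _
  rw [Matrix.IsSymm]
  apply Matrix.ext
  intro j k
  rw [Matrix.transpose_apply]
  show (∫ s in Ioo (0:ℝ) T, c (q.2 - s) * Φ (q.1, s) k j)
      = ∫ s in Ioo (0:ℝ) T, c (q.2 - s) * Φ (q.1, s) j k
  congr 1
  funext s
  congr 1
  exact (hΦs (q.1, s)).apply j k


/-- **Uniform integrability of modulars of mollifications**: for a standard mollifier
`ρᵢ(τ) = i ρ(iτ)` and `Φ : Q → S³` with `∫_Q M(x, Φ) dx dt < ∞`, the sequence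
`{M(x, (ρᵢ ∗ Φ)(x,t))}` is uniformly integrable on `Q`. -/
theorem unifInt_modular_timeConv
    (Ω : Set E3) (hΩo : IsOpen Ω) (hΩb : Bornology.IsBounded Ω)
    (T : ℝ) (hT : 0 < T)
    (M : E3 → Mat3 → ℝ) (hM : IsNFunction Ω M)
    (ρ : ℝ → ℝ) (hρsmooth : ContDiff ℝ (⊤ : ℕ∞) ρ) (hρsupp : HasCompactSupport ρ)
    (hρeven : ∀ τ, ρ (-τ) = ρ τ) (hρnn : ∀ τ, 0 ≤ ρ τ)
    (hρint : (∫ τ, ρ τ) = 1)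
    (Φ : E3 × ℝ → Mat3) (hΦm : Measurable Φ) (hΦs : ∀ q, Φ q ∈ Sym3)
    (hΦmod : ∫⁻ q in Ω ×ˢ Ioo (0:ℝ) T, ENNReal.ofReal (M q.1 (Φ q)) < ⊤) :
    UnifIntSeq (volume.restrict (Ω ×ˢ Ioo (0:ℝ) T))
      (fun i q => M q.1 (timeConv T (fun τ => (i : ℝ) * ρ ((i : ℝ) * τ)) Φ q)) := by
  classical
  have hQms : MeasurableSet (Ω ×ˢ Ioo (0:ℝ) T) := hΩo.measurableSet.prod measurableSet_Ioo
  set μ := volume.restrict (Ω ×ˢ Ioo (0:ℝ) T) with hμ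
  set φ : ℕ → E3 × ℝ → ℝ :=
    fun i q => M q.1 (timeConv T (fun τ => (i : ℝ) * ρ ((i : ℝ) * τ)) Φ q) with hφ
  -- mollifier facts
  have hρc : Continuous ρ := hρsmooth.continuous
  have hic : ∀ i : ℕ, Continuous fun τ : ℝ => (i:ℝ) * ρ ((i:ℝ) * τ) := fun i =>
    continuous_const.mul (hρc.comp (continuous_const.mul continuous_id))
  have hinn : ∀ (i : ℕ) (τ : ℝ), 0 ≤ (i:ℝ) * ρ ((i:ℝ) * τ) := fun i τ =>
    mul_nonneg (Nat.cast_nonneg _) (hρnn _)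
  have hics : ∀ i : ℕ, 1 ≤ i → HasCompactSupport fun τ : ℝ => (i:ℝ) * ρ ((i:ℝ) * τ) := by
    intro i hi
    have hi0 : ((i:ℝ)) ≠ 0 := Nat.cast_ne_zero.2 (by omega)
    have h1 : HasCompactSupport fun τ : ℝ => ρ ((i:ℝ) * τ) :=
      hρsupp.comp_homeomorph (Homeomorph.mulLeft₀ (i:ℝ) hi0)
    exact h1.mul_left
  have hii : ∀ i : ℕ, 1 ≤ i → (∫ τ, (i:ℝ) * ρ ((i:ℝ) * τ)) = 1 := aux_int_scaled ρ hρint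
  -- the modular integrand
  have hMphi : Measurable fun q : E3 × ℝ => M q.1 (Φ q) :=
    aux_meas_M hM.meas hM.cont hΦm hΦs measurable_fst
  set g0 : E3 × ℝ → ℝ≥0∞ := fun q => ENNReal.ofReal (M q.1 (Φ q)) with hg0
  have hg0m : Measurable g0 := hMphi.ennreal_ofReal
  set G : E3 × ℝ → ℝ≥0∞ :=
    fun q => (Ioo (0:ℝ) T).indicator (fun s => g0 (q.1, s)) q.2 with hG
  have hGeq : G = fun q => ((univ : Set E3) ×ˢ Ioo (0:ℝ) T).indicator g0 q := by
    funext q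
    by_cases hq : q.2 ∈ Ioo (0:ℝ) T
    · simp only [hG]
      rw [indicator_of_mem hq, indicator_of_mem (show q ∈ _ ×ˢ _ from ⟨mem_univ _, hq⟩)]
    · simp only [hG]
      rw [indicator_of_notMem hq, indicator_of_notMem (fun hc => hq hc.2)]
  have hGm : Measurable G := by
    rw [hGeq]; exact hg0m.indicator (MeasurableSet.univ.prod measurableSet_Ioo)
  have hGfin : ∀ q, G q < ⊤ := by
    intro q
    simp only [hG]
    by_cases hq : q.2 ∈ Ioo (0:ℝ) T
    · rw [indicator_of_mem hq]; exact ENNReal.ofReal_lt_top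
    · rw [indicator_of_notMem hq]; exact ENNReal.zero_lt_top
  -- weights
  set w : ℕ → ℝ → ℝ≥0∞ := fun i τ => ENNReal.ofReal ((i:ℝ) * ρ ((i:ℝ) * τ)) with hwdef
  have hwm : ∀ i, Measurable (w i) := fun i => (hic i).measurable.ennreal_ofReal
  have hmass : ∀ i : ℕ, (∫⁻ τ, w i τ) ≤ 1 := by
    intro i
    rcases Nat.eq_zero_or_pos i with h0 | h1
    · subst h0; simp [hwdef]
    · have hint : Integrable (fun τ => (i:ℝ) * ρ ((i:ℝ) * τ)) :=
        (hic i).integrable_of_hasCompactSupport (hics i h1)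
      rw [hwdef]
      rw [aux_lint_ofReal hint (hinn i), hii i h1]
      exact le_of_eq ENNReal.ofReal_one
  have hmass_right : ∀ (i : ℕ) (s : ℝ), (∫⁻ t, w i (t - s)) ≤ 1 := fun i s => by
    rw [aux_lint_sub_right (w i) s]; exact hmass i
  have hmass_left : ∀ (i : ℕ) (t : ℝ), (∫⁻ s, w i (t - s)) ≤ 1 := fun i t => by
    rw [aux_lint_sub_left (w i) t]; exact hmass i
  -- mollified bound
  set H : ℕ → E3 × ℝ → ℝ≥0∞ := fun i q => ∫⁻ s, w i (q.2 - s) * G (q.1, s) with hH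
  -- J
  set J : ℕ → ℝ≥0∞ :=
    fun n => ∫⁻ q in Ω ×ˢ (univ : Set ℝ), (G q - (n : ℝ≥0∞)) ∂volume with hJ
  have hJ00 : (∫⁻ q in Ω ×ˢ (univ : Set ℝ), G q ∂volume) = J 0 := by
    rw [hJ]; simp
  have hJ0 : J 0 = ∫⁻ q in Ω ×ˢ Ioo (0:ℝ) T, g0 q ∂volume := by
    rw [← hJ00, hGeq]
    rw [lintegral_indicator (MeasurableSet.univ.prod measurableSet_Ioo)]
    rw [Measure.restrict_restrict (MeasurableSet.univ.prod measurableSet_Ioo)]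
    rw [Set.prod_inter_prod, univ_inter, inter_univ]
  have hJ0fin : J 0 < ⊤ := by rw [hJ0]; exact hΦmod
  -- superlinearity
  have hrr : ∀ x ∈ Ω, ∃ r : ℝ, 0 ≤ r ∧ ∀ ξ ∈ Sym3, mnorm ξ ≤ r + M x ξ := by
    intro x hx
    have h2 : ∀ᶠ ξ in (comap mnorm atTop ⊓ 𝓟 Sym3), 1 ≤ M x ξ / mnorm ξ :=
      (hM.tendsto_top x hx).eventually_ge_atTop 1
    rw [eventually_inf_principal, eventually_comap] at h2
    obtain ⟨r0, hb⟩ := eventually_atTop.1 h2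
    refine ⟨max r0 0, le_max_right _ _, fun ξ hξ => ?_⟩
    rcases le_or_gt (mnorm ξ) (max r0 0) with hle | hgt
    · have := hM.nonneg x ξ; linarith
    · have h0 : 0 < mnorm ξ := lt_of_le_of_lt (le_max_right r0 0) hgt
      have h1 : 1 ≤ M x ξ / mnorm ξ :=
        hb (mnorm ξ) ((le_max_left r0 0).trans hgt.le) ξ rfl hξ
      have h2 : mnorm ξ ≤ M x ξ := (one_le_div h0).1 h1
      have := le_max_right r0 0; linarith
  -- a.e. section finiteness
  have hFxm : Measurable fun x : E3 => ∫⁻ s in Ioo (0:ℝ) T, g0 (x, s) ∂volume :=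
    hg0m.lintegral_prod_right'
  have hiter : (∫⁻ x in Ω, ∫⁻ s in Ioo (0:ℝ) T, g0 (x, s) ∂volume ∂volume)
      = ∫⁻ q in Ω ×ˢ Ioo (0:ℝ) T, g0 q ∂volume := by
    rw [Measure.volume_eq_prod, ← Measure.prod_restrict,
      lintegral_prod _ hg0m.aemeasurable]
  have hsec_x : ∀ᵐ x ∂(volume.restrict Ω),
      (∫⁻ s in Ioo (0:ℝ) T, g0 (x, s) ∂volume) < ⊤ :=
    ae_lt_top hFxm (by rw [hiter]; exact (hJ0 ▸ hJ0fin).ne)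
  have hsec_ae : ∀ᵐ q ∂μ, (∫⁻ s in Ioo (0:ℝ) T, g0 (q.1, s) ∂volume) < ⊤ := by
    set B : Set E3 := {x | ¬ (∫⁻ s in Ioo (0:ℝ) T, g0 (x, s) ∂volume) < ⊤} with hB
    have hBm : MeasurableSet B := (measurableSet_lt hFxm measurable_const).compl
    have hB0 : volume.restrict Ω B = 0 := by
      simp only [hB]
      exact ae_iff.1 hsec_x
    rw [ae_iff]
    refine le_antisymm ?_ zero_le
    have hsub : {q : E3 × ℝ | ¬ (∫⁻ s in Ioo (0:ℝ) T, g0 (q.1, s) ∂volume) < ⊤}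
        = B ×ˢ (univ : Set ℝ) := by
      ext q; simp [hB]
    rw [hsub]
    calc μ (B ×ˢ (univ : Set ℝ))
        ≤ (volume.restrict (Ω ×ˢ (univ : Set ℝ))) (B ×ˢ (univ : Set ℝ)) := by
          rw [hμ]
          exact Measure.restrict_mono (prod_mono subset_rfl (subset_univ _)) le_rfl _
      _ = 0 := by
          rw [Measure.volume_eq_prod, ← Measure.prod_restrict, Measure.restrict_univ,
            Measure.prod_prod, hB0, zero_mul]
  have hQae : ∀ᵐ q ∂μ, q ∈ Ω ×ˢ Ioo (0:ℝ) T := ae_restrict_mem hQms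
  -- the key a.e. bound
  have hkey : ∀ᵐ q ∂μ, ∀ i, ENNReal.ofReal |φ i q| ≤ H i q := by
    filter_upwards [hQae, hsec_ae] with q hq hq2
    intro i
    have hx : q.1 ∈ Ω := (mem_prod.1 hq).1
    have hz0 : M q.1 0 = 0 := (hM.zero_iff q.1 hx 0 aux_zero_mem).mpr rfl
    rcases Nat.eq_zero_or_pos i with h0 | h1
    · subst h0
      have htc0 : timeConv T (fun τ => ((0:ℕ):ℝ) * ρ (((0:ℕ):ℝ) * τ)) Φ q = 0 := by
        apply Matrix.ext; intro j k
        show (∫ s in Ioo (0:ℝ) T, ((0:ℕ):ℝ) * ρ (((0:ℕ):ℝ) * (q.2 - s)) * Φ (q.1, s) j k)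
            = (0 : Mat3) j k
        simp
      rw [hφ]
      simp only [htc0, hz0, abs_zero, ENNReal.ofReal_zero]
      exact zero_le
    · have hMsec : Measurable fun s : ℝ => M q.1 (Φ (q.1, s)) :=
        aux_meas_M hM.meas hM.cont (hΦm.comp (measurable_const.prodMk measurable_id))
          (fun s => hΦs _) measurable_const
      have hfinq : ∫⁻ s in Ioo (0:ℝ) T, ENNReal.ofReal (M q.1 (Φ (q.1, s))) ∂volume < ⊤ := by
        simpa [hg0] using hq2
      obtain ⟨r, hr0, hr⟩ := hrr q.1 hx
      have hjb := aux_jensen T q.1 (hM.nonneg q.1) (hM.cont q.1) (hM.convexOn q.1) hz0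
        hΦm hΦs hMsec hfinq hr0 hr (hic i) (hics i h1) (hinn i) (hii i h1) q.2
      have hRHS : (∫⁻ s, ENNReal.ofReal ((i:ℝ) * ρ ((i:ℝ) * (q.2 - s))) *
          (Ioo (0:ℝ) T).indicator (fun s => ENNReal.ofReal (M q.1 (Φ (q.1, s)))) s)
          = H i q := by
        simp only [hH, hwdef, hG, hg0]
      calc ENNReal.ofReal |φ i q| = ENNReal.ofReal (φ i q) := by
            rw [abs_of_nonneg (hM.nonneg _ _)]
        _ ≤ H i q := by rw [hφ, ← hRHS]; exact hjb
  -- measurability of φ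
  have hφm : ∀ i, Measurable (φ i) := by
    intro i
    rw [hφ]
    exact aux_meas_M hM.meas hM.cont (aux_timeConv_meas T (hic i) hΦm)
      (fun q => aux_timeConv_symm T _ hΦs q) measurable_fst
  -- splitting of H
  have hHsplit : ∀ (i n : ℕ) (q : E3 × ℝ),
      H i q ≤ (n:ℝ≥0∞) + ∫⁻ s, w i (q.2 - s) * (G (q.1, s) - n) := by
    intro i n q
    have hmwt : Measurable fun s : ℝ => w i (q.2 - s) :=
      (hwm i).comp (measurable_const.sub measurable_id)
    have hm1 : Measurable fun s : ℝ => w i (q.2 - s) * (n:ℝ≥0∞) := hmwt.mul_const _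
    calc H i q ≤ ∫⁻ s, w i (q.2 - s) * ((n:ℝ≥0∞) + (G (q.1, s) - n)) := by
          rw [hH]
          exact lintegral_mono fun s => mul_le_mul_right le_add_tsub _
      _ = (∫⁻ s, w i (q.2 - s) * (n:ℝ≥0∞))
            + ∫⁻ s, w i (q.2 - s) * (G (q.1, s) - n) := by
          rw [← lintegral_add_left hm1]
          congr 1; funext s; rw [mul_add]
      _ ≤ (n:ℝ≥0∞) + ∫⁻ s, w i (q.2 - s) * (G (q.1, s) - n) := by
          refine add_le_add_left ?_ _
          rw [lintegral_mul_const _ hmwt]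
          calc (∫⁻ s, w i (q.2 - s)) * n ≤ 1 * n := mul_le_mul_left (hmass_left i q.2) _
            _ = n := one_mul _
  -- the main estimate
  have hmain : ∀ (i n : ℕ) (A : Set (E3 × ℝ)),
      (∫⁻ q in A, ENNReal.ofReal |φ i q| ∂μ) ≤ (n:ℝ≥0∞) * μ A + J n := by
    intro i n A
    have hWm : Measurable fun q : E3 × ℝ => ∫⁻ s, w i (q.2 - s) * (G (q.1, s) - n) :=
      Measurable.lintegral_prod_right'
        (((hwm i).comp ((measurable_fst.snd).sub measurable_snd)).mul
          ((hGm.comp ((measurable_fst.fst).prodMk measurable_snd)).sub measurable_const))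
    calc ∫⁻ q in A, ENNReal.ofReal |φ i q| ∂μ
        ≤ ∫⁻ q in A, H i q ∂μ :=
          lintegral_mono_ae ((ae_restrict_of_ae hkey).mono fun q hq => hq i)
      _ ≤ ∫⁻ q in A, ((n:ℝ≥0∞) + ∫⁻ s, w i (q.2 - s) * (G (q.1, s) - n)) ∂μ :=
          lintegral_mono fun q => hHsplit i n q
      _ = (n:ℝ≥0∞) * μ A + ∫⁻ q in A, (∫⁻ s, w i (q.2 - s) * (G (q.1, s) - n)) ∂μ := by
          rw [lintegral_add_left measurable_const, lintegral_const,
            Measure.restrict_apply_univ]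
      _ ≤ (n:ℝ≥0∞) * μ A + J n := by
          refine add_le_add_right ?_ _
          calc ∫⁻ q in A, (∫⁻ s, w i (q.2 - s) * (G (q.1, s) - n)) ∂μ
              ≤ ∫⁻ q, (∫⁻ s, w i (q.2 - s) * (G (q.1, s) - n)) ∂μ :=
                lintegral_mono' Measure.restrict_le_self le_rfl
            _ ≤ ∫⁻ q in Ω ×ˢ (univ : Set ℝ),
                  (∫⁻ s, w i (q.2 - s) * (G (q.1, s) - n)) ∂volume := by
                rw [hμ]
                exact lintegral_mono'
                  (Measure.restrict_mono (prod_mono subset_rfl (subset_univ _)) le_rfl) le_rfl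
            _ ≤ ∫⁻ q in Ω ×ˢ (univ : Set ℝ), (G q - n) ∂volume :=
                aux_tonelli Ω T (hGm.sub measurable_const) (hwm i) (hmass_right i)
            _ = J n := by rw [hJ]
  have hmain0 : ∀ i, (∫⁻ q, ENNReal.ofReal |φ i q| ∂μ) ≤ J 0 := by
    intro i
    have := hmain i 0 univ
    rwa [Measure.restrict_univ, Nat.cast_zero, zero_mul, zero_add] at this
  -- dominated convergence for J
  have hJtendsto : Tendsto J atTop (𝓝 0) := by
    have hlim : ∀ᵐ q ∂(volume.restrict (Ω ×ˢ (univ : Set ℝ))),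
        Tendsto (fun n : ℕ => G q - n) atTop (𝓝 0) := by
      refine ae_of_all _ fun q => ?_
      obtain ⟨m, hm⟩ := ENNReal.exists_nat_gt (hGfin q).ne
      refine tendsto_atTop_of_eventually_const (i₀ := m) fun n hn => ?_
      exact tsub_eq_zero_of_le (hm.le.trans (Nat.cast_le.2 hn))
    have := tendsto_lintegral_of_dominated_convergence (μ := volume.restrict (Ω ×ˢ univ))
      (F := fun n : ℕ => fun q => G q - n) (f := fun _ => 0) (bound := G)
      (fun n => hGm.sub measurable_const)
      (fun n => ae_of_all _ fun q => tsub_le_self)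
      (by rw [hJ00]; exact hJ0fin.ne) hlim
    simpa [hJ, lintegral_zero] using this
  -- conclusion
  refine ⟨fun i => lt_of_le_of_lt (hmain0 i) hJ0fin, fun ε hε => ?_⟩
  have hε2 : (0:ℝ≥0∞) < ENNReal.ofReal (ε / 2) := ENNReal.ofReal_pos.2 (half_pos hε)
  obtain ⟨n₀, hn₀⟩ : ∃ n : ℕ, J n ≤ ENNReal.ofReal (ε / 2) := by
    obtain ⟨n, hn⟩ := (hJtendsto.eventually_lt_const hε2).exists
    exact ⟨n, hn.le⟩
  have hBne : (n₀:ℝ≥0∞) * J 0 ≠ ⊤ :=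
    ENNReal.mul_ne_top (ENNReal.natCast_ne_top _) hJ0fin.ne
  set R : ℝ := max 1 (((n₀:ℝ≥0∞) * J 0 / ENNReal.ofReal (ε / 2)).toReal + 1) with hR
  have hR1 : (1:ℝ) ≤ R := le_max_left _ _
  have hRne0 : ENNReal.ofReal R ≠ 0 := by
    rw [Ne, ENNReal.ofReal_eq_zero]; intro h; linarith
  have hd : (n₀:ℝ≥0∞) * J 0 / ENNReal.ofReal (ε / 2) ≤ ENNReal.ofReal R := by
    have hne : (n₀:ℝ≥0∞) * J 0 / ENNReal.ofReal (ε / 2) ≠ ⊤ :=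
      (ENNReal.div_lt_top hBne hε2.ne').ne
    calc (n₀:ℝ≥0∞) * J 0 / ENNReal.ofReal (ε / 2)
        = ENNReal.ofReal (((n₀:ℝ≥0∞) * J 0 / ENNReal.ofReal (ε / 2)).toReal) :=
          (ENNReal.ofReal_toReal hne).symm
      _ ≤ ENNReal.ofReal R := by
          refine ENNReal.ofReal_le_ofReal ?_
          rw [hR]
          calc ((n₀:ℝ≥0∞) * J 0 / ENNReal.ofReal (ε / 2)).toReal
              ≤ ((n₀:ℝ≥0∞) * J 0 / ENNReal.ofReal (ε / 2)).toReal + 1 := by linarith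
            _ ≤ _ := le_max_right _ _
  have hRdiv : (n₀:ℝ≥0∞) * J 0 / ENNReal.ofReal R ≤ ENNReal.ofReal (ε / 2) := by
    rw [ENNReal.div_le_iff hRne0 ENNReal.ofReal_ne_top]
    rw [ENNReal.div_le_iff hε2.ne' ENNReal.ofReal_ne_top] at hd
    calc (n₀:ℝ≥0∞) * J 0 ≤ ENNReal.ofReal R * ENNReal.ofReal (ε / 2) := hd
      _ = ENNReal.ofReal (ε / 2) * ENNReal.ofReal R := mul_comm _ _
  refine ⟨R, fun i => ?_⟩
  set A : Set (E3 × ℝ) := {q | R ≤ |φ i q|} with hA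
  have hμA : μ A ≤ J 0 / ENNReal.ofReal R := by
    rw [ENNReal.le_div_iff_mul_le (Or.inl hRne0) (Or.inl ENNReal.ofReal_ne_top)]
    calc μ A * ENNReal.ofReal R = ∫⁻ _ in A, ENNReal.ofReal R ∂μ := by
          rw [setLIntegral_const, mul_comm]
      _ ≤ ∫⁻ q in A, ENNReal.ofReal |φ i q| ∂μ :=
          setLIntegral_mono ((hφm i).abs.ennreal_ofReal) fun q hq =>
            ENNReal.ofReal_le_ofReal hq
      _ ≤ ∫⁻ q, ENNReal.ofReal |φ i q| ∂μ :=
          lintegral_mono' Measure.restrict_le_self le_rfl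
      _ ≤ J 0 := hmain0 i
  calc ∫⁻ q in A, ENNReal.ofReal |φ i q| ∂μ
      ≤ (n₀:ℝ≥0∞) * μ A + J n₀ := hmain i n₀ A
    _ ≤ (n₀:ℝ≥0∞) * (J 0 / ENNReal.ofReal R) + J n₀ :=
        add_le_add_left (mul_le_mul_right hμA _) _
    _ ≤ ENNReal.ofReal (ε / 2) + ENNReal.ofReal (ε / 2) := by
        refine add_le_add ?_ hn₀
        rw [← mul_div_assoc]
        exact hRdiv
    _ = ENNReal.ofReal ε := by
        rw [← ENNReal.ofReal_add (by linarith) (by linarith), add_halves]
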